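/- arXiv:2011.05660 — 7 statements merged into one kernel-verified Lean document; each statement's English description precedes it below -/
import Mathlib

section
/- Let G be a group, n ≥ 2 a natural number, and a, b ∈ G satisfy a·b·a = b·a·b and a·b²·a = b^(n-2). Then b·a²·b = a^(n-2), provided also aⁿ = 1. -/
/-! Conjugation by the half twist `a * b * a` of the braid relation swaps `a` and `b`; applying this
automorphism to `a * b ^ 2 * a = b ^ (n - 2)` gives `b * a ^ 2 * b = a ^ (n - 2)`. -/

section BraidConj

variable {G : Type*} [Group G] {a b : G}

theorem conj_halfTwist_left (hbraid : a * b * a = b * a * b) : MulAut.conj (a * b * a) a = b := by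
  rw [MulAut.conj_apply]
  nth_rw 1 [hbraid]
  group

theorem conj_halfTwist_right (hbraid : a * b * a = b * a * b) :
    MulAut.conj (a * b * a) b = a := by
  rw [MulAut.conj_apply]
  nth_rw 2 [hbraid]
  group

end BraidConj

theorem symmetric_relation_general {G : Type*} [Group G] (a b : G) (n : ℕ)
    (hbraid : a * b * a = b * a * b) (hrel : a * b ^ 2 * a = b ^ (n - 2)) :
    b * a ^ 2 * b = a ^ (n - 2) := by
  have hswap_a := conj_halfTwist_left hbraid
  have hswap_b := conj_halfTwist_right hbraid
  generalize MulAut.conj (a * b * a) = φ at hswap_a hswap_b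
  simpa only [map_mul, map_pow, hswap_a, hswap_b] using congrArg φ hrel

theorem symmetric_relation {G : Type*} [Group G] (a b : G) (n : ℕ) (hn : 2 ≤ n)
    (hbraid : a * b * a = b * a * b) (hrel : a * b ^ 2 * a = b ^ (n - 2))
    (ha : a ^ n = 1) : b * a ^ 2 * b = a ^ (n - 2) :=
  symmetric_relation_general a b n hbraid hrel
end

section
/- Let G be a group and a, b ∈ G satisfy a·b·a = b·a·b and a·b²·a = b^(n-2) for some n ≥ 2. Then (ab)³ = aⁿ, i.e. ababab = aⁿ. -/
/-!
Conjugation by the Garside element `Δ = a b a` swaps `a` and `b` under the braid relation, so it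
carries `a b² a = b ^ (n - 2)` to `b a² b = a ^ (n - 2)`. Since `(a b)³ = a (b a b) a b = a² (b a² b)`,
this gives `(a b)³ = a ^ n`.
-/

section Braid

variable {G : Type*} [Group G] {a b : G}

theorem MulAut.conj_braid_left (h : a * b * a = b * a * b) : MulAut.conj (a * b * a) a = b := by
  rw [MulAut.conj_apply, mul_inv_eq_iff_eq_mul]
  calc a * b * a * a = b * a * b * a := by rw [h]
    _ = b * (a * b * a) := by simp only [mul_assoc]

theorem MulAut.conj_braid_right (h : a * b * a = b * a * b) : MulAut.conj (a * b * a) b = a := by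
  rw [MulAut.conj_apply, mul_inv_eq_iff_eq_mul]
  calc a * b * a * b = a * (b * a * b) := by simp only [mul_assoc]
    _ = a * (a * b * a) := by rw [h]

theorem MulAut.conj_braid_mul_sq_mul (h : a * b * a = b * a * b) :
    MulAut.conj (a * b * a) (a * b ^ 2 * a) = b * a ^ 2 * b := by
  rw [map_mul, map_mul, map_pow, conj_braid_left h, conj_braid_right h]

theorem mul_pow_three_eq_of_braid (h : a * b * a = b * a * b) :
    (a * b) ^ 3 = a ^ 2 * (b * a ^ 2 * b) :=
  calc (a * b) ^ 3 = a * (b * a * b) * a * b := by simp only [pow_succ, pow_zero, one_mul, mul_assoc]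
    _ = a * (a * b * a) * a * b := by rw [h]
    _ = a ^ 2 * (b * a ^ 2 * b) := by simp only [sq, mul_assoc]

end Braid

theorem ab_cubed_eq_a_pow {G : Type*} [Group G] (a b : G) (n : ℕ) (hn : 2 ≤ n)
    (hbraid : a * b * a = b * a * b) (hrel : a * b ^ 2 * a = b ^ (n - 2)) :
    (a * b) ^ 3 = a ^ n := by
  have hconj : b * a ^ 2 * b = a ^ (n - 2) := by
    rw [← MulAut.conj_braid_mul_sq_mul hbraid, hrel, map_pow, MulAut.conj_braid_right hbraid]
  rw [mul_pow_three_eq_of_braid hbraid, hconj, ← pow_add, Nat.add_sub_cancel' hn]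
end

section
/- Let G be a group and a, b ∈ G satisfy a·b·a = b·a·b and a·b²·a = b^(n-2) for some n ≥ 2. Then aⁿ = bⁿ. -/
/-!
Put `c = a * b * a`. The braid relation gives `c * b = a * c`, so `c` conjugates `b` to `a`
and hence `bⁿ` to `aⁿ`. Applying the braid relation to both factors of `c²` gives
`c² = (b * a * b) * (b * a * b) = b * (a * b² * a) * b = bⁿ`, so `bⁿ` commutes with `c`
and is therefore fixed by the conjugation: `aⁿ = bⁿ`.
-/

theorem SemiconjBy.eq_of_commute {M : Type*} [Mul M] [IsRightCancelMul M] {c x y : M}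
    (h : SemiconjBy c x y) (hc : Commute c x) : y = x :=
  mul_right_cancel (h.symm.trans hc)

theorem semiconjBy_of_braid {M : Type*} [Semigroup M] {a b : M} (h : a * b * a = b * a * b) :
    SemiconjBy (a * b * a) b a :=
  calc a * b * a * b = a * (b * a * b) := by simp only [mul_assoc]
    _ = a * (a * b * a) := by rw [h]

theorem sq_eq_of_braid {M : Type*} [Monoid M] {a b : M} (h : a * b * a = b * a * b) :
    (a * b * a) ^ 2 = b * (a * b ^ 2 * a) * b := by
  rw [sq, h]
  simp only [sq, mul_assoc]

theorem a_pow_eq_b_pow {G : Type*} [Group G] (a b : G) (n : ℕ) (hn : 2 ≤ n)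
    (hbraid : a * b * a = b * a * b) (hrel : a * b ^ 2 * a = b ^ (n - 2)) :
    a ^ n = b ^ n := by
  have hsq : (a * b * a) ^ 2 = b ^ n := by
    rw [sq_eq_of_braid hbraid, hrel, ← pow_succ', ← pow_succ]
    congr 1
    omega
  have hcomm : Commute (a * b * a) (b ^ n) := hsq ▸ Commute.self_pow _ 2
  exact ((semiconjBy_of_braid hbraid).pow_right n).eq_of_commute hcomm
end

section
/- Let G be a group and a, b ∈ G satisfy a·b·a = b·a·b and a·b²·a = b^(n-2) for some n ≥ 2. Then the element aⁿ commutes with both a and b, hence is central in the subgroup generated by a and b. -/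
/-!
The Garside element `Δ = a * b * a` conjugates `a` to `b` and `b` to `a`, so conjugating
`a * b ^ 2 * a = b ^ (n - 2)` by `Δ` gives `b * a ^ 2 * b = a ^ (n - 2)`. Hence
`a ^ n = a * (b * a ^ 2 * b) * a = Δ ^ 2`, and symmetrically `b ^ n = (b * a * b) ^ 2 = Δ ^ 2`.
So `a ^ n = b ^ n` commutes with both generators.
-/

section Braid

variable {M : Type*} [Monoid M] {a b : M}

theorem semiconjBy_braid_left (hbraid : a * b * a = b * a * b) :
    SemiconjBy (a * b * a) a b := by
  show a * b * a * a = b * (a * b * a)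
  conv_lhs => rw [hbraid]
  simp only [mul_assoc]

theorem semiconjBy_braid_right (hbraid : a * b * a = b * a * b) :
    SemiconjBy (a * b * a) b a := by
  show a * b * a * b = a * (a * b * a)
  conv_rhs => rw [hbraid]
  simp only [mul_assoc]

theorem pow_add_two_eq_sq_of_mul_pow_two_mul {k : ℕ} (h : b * a ^ 2 * b = a ^ k) :
    a ^ (k + 2) = (a * b * a) ^ 2 := by
  rw [pow_succ, pow_succ', ← h]
  simp only [sq, mul_assoc]

theorem braid_mul_pow_mul_swap [IsRightCancelMul M] {i k : ℕ} (hbraid : a * b * a = b * a * b)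
    (h : a * b ^ i * a = b ^ k) : b * a ^ i * b = a ^ k := by
  have hΔ : SemiconjBy (a * b * a) (a * b ^ i * a) (b * a ^ i * b) :=
    ((semiconjBy_braid_left hbraid).mul_right
      ((semiconjBy_braid_right hbraid).pow_right i)).mul_right (semiconjBy_braid_left hbraid)
  rw [h] at hΔ
  exact mul_right_cancel (hΔ.symm.trans ((semiconjBy_braid_right hbraid).pow_right k))

theorem pow_eq_pow_of_braid [IsRightCancelMul M] {k : ℕ} (hbraid : a * b * a = b * a * b)
    (h : a * b ^ 2 * a = b ^ k) : a ^ (k + 2) = b ^ (k + 2) := by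
  rw [pow_add_two_eq_sq_of_mul_pow_two_mul (braid_mul_pow_mul_swap hbraid h),
    pow_add_two_eq_sq_of_mul_pow_two_mul h, hbraid]

end Braid

theorem a_pow_central {G : Type*} [Group G] (a b : G) (n : ℕ) (hn : 2 ≤ n)
    (hbraid : a * b * a = b * a * b) (hrel : a * b ^ 2 * a = b ^ (n - 2)) :
    Commute (a ^ n) a ∧ Commute (a ^ n) b ∧
      ∀ g ∈ Subgroup.closure ({a, b} : Set G), Commute (a ^ n) g := by
  obtain ⟨k, rfl⟩ := Nat.exists_eq_add_of_le' hn
  have hab : a ^ (k + 2) = b ^ (k + 2) := pow_eq_pow_of_braid hbraid hrel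
  have hca : Commute (a ^ (k + 2)) a := (Commute.refl a).pow_left _
  have hcb : Commute (a ^ (k + 2)) b := hab ▸ (Commute.refl b).pow_left _
  refine ⟨hca, hcb, fun g hg => ?_⟩
  have hcentral : a ^ (k + 2) ∈ Subgroup.centralizer ({a, b} : Set G) := by
    rintro x (rfl | rfl)
    exacts [hca.symm, hcb.symm]
  exact Subgroup.mem_centralizer_iff.mp
    (Subgroup.closure_le_centralizer_centralizer _ hg) _ hcentral
end

section
/- In any group G, if x and y satisfy x² = y³ = (xy)ⁿ = 1 for some n ≥ 2, then a := y²x and b := xy² satisfy aⁿ = 1 and a·b²·a = b^(n-2). -/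
/-!
With `a = y²x` and `b = xy²`: since `x⁻¹ = x` and `y⁻¹ = y²`, `a = (xy)⁻¹` has order dividing `n`,
and `b = y a y⁻¹` is conjugate to it. Moreover `a b² = y x y⁻¹` is an involution, so
`a b² a = b⁻² = bⁿ⁻²`.
-/

section
variable {G : Type*} [Group G] {x y : G}

theorem inv_eq_self_of_sq_eq_one (hx : x ^ 2 = 1) : x⁻¹ = x :=
  inv_eq_of_mul_eq_one_right (by rwa [← sq])

theorem inv_eq_sq_of_pow_three_eq_one (hy : y ^ 3 = 1) : y⁻¹ = y ^ 2 :=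
  inv_eq_of_mul_eq_one_right (by rwa [← pow_succ'])

theorem sq_mul_eq_mul_inv (hx : x ^ 2 = 1) (hy : y ^ 3 = 1) : y ^ 2 * x = (x * y)⁻¹ := by
  rw [mul_inv_rev, inv_eq_self_of_sq_eq_one hx, inv_eq_sq_of_pow_three_eq_one hy]

theorem mul_sq_eq_conj (hy : y ^ 3 = 1) : x * y ^ 2 = y * (y ^ 2 * x) * y⁻¹ := by
  rw [← inv_eq_sq_of_pow_three_eq_one hy]
  group

theorem sq_mul_mul_mul_sq_sq_eq_conj (hx : x ^ 2 = 1) (hy : y ^ 3 = 1) :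
    y ^ 2 * x * (x * y ^ 2) ^ 2 = y * x * y⁻¹ :=
  calc y ^ 2 * x * (x * y ^ 2) ^ 2 = y ^ 2 * x ^ 2 * y ^ 2 * x * y ^ 2 := by
        simp only [sq, mul_assoc]
    _ = y ^ 3 * y * x * y ^ 2 := by rw [hx]; group
    _ = y * x * y⁻¹ := by rw [hy, inv_eq_sq_of_pow_three_eq_one hy, one_mul]

theorem mul_sq_mul_eq_pow_sub_two {a b : G} {n : ℕ} (hn : 2 ≤ n) (hb : b ^ n = 1)
    (hab : (a * b ^ 2) ^ 2 = 1) : a * b ^ 2 * a = b ^ (n - 2) := by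
  rw [pow_sub b hn, hb, one_mul]
  exact eq_inv_of_mul_eq_one_left (by rw [mul_assoc, ← sq, hab])
end

theorem vonDyck_gens_satisfy_relations {G : Type*} [Group G] (x y : G) (n : ℕ)
    (hn : 2 ≤ n) (hx : x ^ 2 = 1) (hy : y ^ 3 = 1) (hxy : (x * y) ^ n = 1) :
    (y ^ 2 * x) ^ n = 1 ∧
      (y ^ 2 * x) * (x * y ^ 2) ^ 2 * (y ^ 2 * x) = (x * y ^ 2) ^ (n - 2) := by
  have ha : (y ^ 2 * x) ^ n = 1 := by rw [sq_mul_eq_mul_inv hx hy, inv_pow, hxy, inv_one]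
  have hb : (x * y ^ 2) ^ n = 1 := by rw [mul_sq_eq_conj hy, conj_pow, ha, mul_one, mul_inv_cancel]
  have hab : (y ^ 2 * x * (x * y ^ 2) ^ 2) ^ 2 = 1 := by
    rw [sq_mul_mul_mul_sq_sq_eq_conj hx hy, conj_pow, hx, mul_one, mul_inv_cancel]
  exact ⟨ha, mul_sq_mul_eq_pow_sub_two hn hb hab⟩
end

section
/- Let G be a group and a, b ∈ G satisfy a·b·a = b·a·b, a·b²·a = b^(n-2), and aⁿ = 1 for some n ≥ 2. Define x := aba and y := ab. Then x² = 1, y³ = 1, and (xy)ⁿ = 1. -/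
/-!
The braid relation reads `(ab) a = b (ab)`, so `b` is conjugate to `a` and `bⁿ = 1`. It also
rewrites both `x²` and `y³` as `ab²ab²`, which the second relation turns into `bⁿ = 1`.
Finally `x y a = x²`, so `x y = a⁻¹` and `(x y)ⁿ = a⁻ⁿ = 1`.
-/

section Monoid

variable {M : Type*} [Monoid M] {a b : M}

theorem braid_sq_eq (h : a * b * a = b * a * b) : (a * b * a) ^ 2 = a * b ^ 2 * a * b ^ 2 := by
  calc (a * b * a) ^ 2 = a * b * (a * b * a) * b := by
        rw [sq]; nth_rewrite 2 [h]; simp only [mul_assoc]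
    _ = a * b ^ 2 * a * b ^ 2 := by rw [h]; simp only [sq, mul_assoc]

theorem braid_mul_pow_three_eq (h : a * b * a = b * a * b) :
    (a * b) ^ 3 = a * b ^ 2 * a * b ^ 2 := by
  calc (a * b) ^ 3 = a * b * (a * b * a) * b := by
        simp only [pow_succ, pow_zero, one_mul, mul_assoc]
    _ = a * b ^ 2 * a * b ^ 2 := by rw [h]; simp only [sq, mul_assoc]

end Monoid

section Group

variable {G : Type*} [Group G] {a b : G}

theorem isConj_of_braid (h : a * b * a = b * a * b) : IsConj a b :=
  isConj_iff.mpr ⟨a * b, by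
    rw [mul_inv_eq_iff_eq_mul, mul_assoc a b a, ← mul_assoc, h]; group⟩

theorem mul_mul_mul_mul_eq_inv_of_sq_eq_one (h : (a * b * a) ^ 2 = 1) :
    a * b * a * (a * b) = a⁻¹ := by
  rw [eq_inv_iff_mul_eq_one, ← h, sq]
  simp only [mul_assoc]

end Group

theorem braid_gens_give_vonDyck {G : Type*} [Group G] (a b : G) (n : ℕ) (hn : 2 ≤ n)
    (hbraid : a * b * a = b * a * b) (hrel : a * b ^ 2 * a = b ^ (n - 2))
    (ha : a ^ n = 1) :
    (a * b * a) ^ 2 = 1 ∧ (a * b) ^ 3 = 1 ∧ ((a * b * a) * (a * b)) ^ n = 1 := by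
  have hb : b ^ n = 1 := isConj_one_right.mp (ha ▸ (isConj_of_braid hbraid).pow n)
  have hword : a * b ^ 2 * a * b ^ 2 = 1 := by
    rw [hrel, ← pow_add, Nat.sub_add_cancel hn, hb]
  have hx : (a * b * a) ^ 2 = 1 := (braid_sq_eq hbraid).trans hword
  refine ⟨hx, (braid_mul_pow_three_eq hbraid).trans hword, ?_⟩
  rw [mul_mul_mul_mul_eq_inv_of_sq_eq_one hx, inv_pow, ha, inv_one]
end

section
/- Let G be a group and a, b ∈ G satisfy a·b·a = b·a·b and a·b²·a = b^(n-2) with n ≥ 2. In the quotient of the subgroup ⟨a,b⟩ by the normal (in fact central) subgroup generated by aⁿ, the images of a and b generate a group satisfying the Von Dyck relations: setting x = aba, y = ab, one has x² = y³ = (xy)ⁿ = 1 in the quotient. -/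
/-!
The braid relation makes `b` conjugate to `a` (by `ab`), so `aⁿ = 1` forces `bⁿ = 1`. Writing
`bⁿ = b · b^(n-2) · b = b (ab²a) b = (bab)²` then gives `x² = 1` for `x = aba = bab`, and
`y³ = (aba)(bab) = x²`. Finally `xy` is conjugate to `b^(n-1)` (by `ba`), whose `n`-th power is
trivial.
-/

section Braid

variable {G : Type*} [Group G] {a b : G}

theorem conj_eq_of_braid (hbraid : a * b * a = b * a * b) : (a * b) * a * (a * b)⁻¹ = b :=
  calc (a * b) * a * (a * b)⁻¹ = (a * b * a) * b⁻¹ * a⁻¹ := by group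
    _ = b := by rw [hbraid]; group

theorem pow_eq_one_of_braid (hbraid : a * b * a = b * a * b) {n : ℕ} (han : a ^ n = 1) :
    b ^ n = 1 := by
  rw [← conj_eq_of_braid hbraid, conj_pow, han, mul_one, mul_inv_cancel]

variable {n : ℕ}

theorem sq_eq_pow_of_braid (hn : 2 ≤ n) (hbraid : a * b * a = b * a * b)
    (hrel : a * b ^ 2 * a = b ^ (n - 2)) : (a * b * a) ^ 2 = b ^ n :=
  calc (a * b * a) ^ 2 = b * (a * b ^ 2 * a) * b := by rw [sq, hbraid]; simp only [sq, mul_assoc]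
    _ = b ^ (1 + (n - 2) + 1) := by rw [hrel]; group
    _ = b ^ n := by congr 1; omega

theorem mul_eq_conj_pow_of_braid (hn : 2 ≤ n) (hbraid : a * b * a = b * a * b)
    (hrel : a * b ^ 2 * a = b ^ (n - 2)) :
    (a * b * a) * (a * b) = (b * a) * b ^ (n - 1) * (b * a)⁻¹ :=
  calc (a * b * a) * (a * b) = (b * a) * (b * (a * b ^ 2 * a)) * (b * a)⁻¹ := by
        rw [hbraid]; group
    _ = (b * a) * b ^ (n - 1) * (b * a)⁻¹ := by
        rw [hrel, ← pow_succ']; congr 3; omega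

theorem vonDyck_relations_of_braid (hn : 2 ≤ n) (hbraid : a * b * a = b * a * b)
    (hrel : a * b ^ 2 * a = b ^ (n - 2)) (han : a ^ n = 1) :
    (a * b * a) ^ 2 = 1 ∧ (a * b) ^ 3 = 1 ∧ ((a * b * a) * (a * b)) ^ n = 1 := by
  have hbn : b ^ n = 1 := pow_eq_one_of_braid hbraid han
  have hx : (a * b * a) ^ 2 = 1 := (sq_eq_pow_of_braid hn hbraid hrel).trans hbn
  refine ⟨hx, ?_, ?_⟩
  · calc (a * b) ^ 3 = (a * b * a) * (b * a * b) := by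
          simp only [pow_succ, pow_zero, one_mul, mul_assoc]
      _ = 1 := by rw [← hbraid, ← sq, hx]
  · rw [mul_eq_conj_pow_of_braid hn hbraid hrel, conj_pow, ← pow_mul, pow_mul', hbn,
      one_pow, mul_one, mul_inv_cancel]

end Braid

theorem quotient_satisfies_vonDyck_relations {G : Type*} [Group G] (a b : G) (n : ℕ)
    (hn : 2 ≤ n) (hbraid : a * b * a = b * a * b) (hrel : a * b ^ 2 * a = b ^ (n - 2))
    (ha : a ∈ Subgroup.closure ({a, b} : Set G))
    (hb : b ∈ Subgroup.closure ({a, b} : Set G)) :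
    let H := Subgroup.closure ({a, b} : Set G)
    let A : H := ⟨a, ha⟩
    let B : H := ⟨b, hb⟩
    let π := QuotientGroup.mk' (Subgroup.normalClosure ({A ^ n} : Set H))
    (π (A * B * A)) ^ 2 = 1 ∧ (π (A * B)) ^ 3 = 1 ∧
      (π (A * B * A) * π (A * B)) ^ n = 1 := by
  intro H A B π
  have hbraid' : π A * π B * π A = π B * π A * π B := by
    simp only [← map_mul]; exact congrArg π (Subtype.ext hbraid)
  have hrel' : π A * π B ^ 2 * π A = π B ^ (n - 2) := by
    simp only [← map_pow, ← map_mul]; exact congrArg π (Subtype.ext hrel)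
  have han : π A ^ n = 1 := by
    rw [← map_pow, QuotientGroup.mk'_apply, QuotientGroup.eq_one_iff]
    exact Subgroup.subset_normalClosure rfl
  simpa only [map_mul] using vonDyck_relations_of_braid hn hbraid' hrel' han
end
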